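/- Every weak zigzag in a lattice can be refined to a zigzag: if x_0,…,x_n is a weak zigzag, then there exists a refinement x'_0,…,x'_n of it which is a zigzag. -/
import Mathlib


variable {V : Type*} [Lattice V]

/-- A *zigzag* of length `n`: consecutive terms are strictly comparable and every
interior term is either the infimum (a sink) or the supremum (a peak) of its two
neighbours. -/
def IsZigzag (x : ℕ → V) (n : ℕ) : Prop :=
  (∀ i < n, x i < x (i + 1) ∨ x (i + 1) < x i) ∧
  ∀ i, i + 2 ≤ n →
    (x (i + 1) < x i ∧ x (i + 1) < x (i + 2) ∧ x (i + 1) = x i ⊓ x (i + 2)) ∨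
    (x i < x (i + 1) ∧ x (i + 2) < x (i + 1) ∧ x (i + 1) = x i ⊔ x (i + 2))

/-- An alternating sequence whose even-indexed terms are sinks and odd-indexed
terms are peaks. -/
def IsAltUp (x : ℕ → V) (n : ℕ) : Prop :=
  ∀ i < n, if Even i then x i ≤ x (i + 1) else x (i + 1) ≤ x i

/-- An alternating sequence whose even-indexed terms are peaks and odd-indexed
terms are sinks. -/
def IsAltDown (x : ℕ → V) (n : ℕ) : Prop :=
  ∀ i < n, if Even i then x (i + 1) ≤ x i else x i ≤ x (i + 1)

/-- An *alternating sequence* of length `n`. -/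
def IsAlternating (x : ℕ → V) (n : ℕ) : Prop :=
  IsAltUp x n ∨ IsAltDown x n

/-- A *weak zigzag*: an alternating sequence of length at least `2` such that any two
terms whose indices differ by `2` or by `3` are incomparable. -/
def IsWeakZigzag (x : ℕ → V) (n : ℕ) : Prop :=
  2 ≤ n ∧ IsAlternating x n ∧
  (∀ i, i + 2 ≤ n → ¬x i ≤ x (i + 2) ∧ ¬x (i + 2) ≤ x i) ∧
  (∀ i, i + 3 ≤ n → ¬x i ≤ x (i + 3) ∧ ¬x (i + 3) ≤ x i)

/-- `x'` is a *refinement* of the alternating sequence `x` (of the same length and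
phase): the endpoints coincide, the sinks increase (`a i ≤ a' i`) and the peaks
decrease (`b' i ≤ b i`). -/
def Refines (x' x : ℕ → V) (n : ℕ) : Prop :=
  x' 0 = x 0 ∧ x' n = x n ∧
  ((IsAltUp x n ∧ IsAltUp x' n ∧
      ∀ i ≤ n, if Even i then x i ≤ x' i else x' i ≤ x i) ∨
   (IsAltDown x n ∧ IsAltDown x' n ∧
      ∀ i ≤ n, if Even i then x' i ≤ x i else x i ≤ x' i))

/-- New sinks: meet of the two neighbouring old peaks. -/
private def zs (x : ℕ → V) (n i : ℕ) : V :=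
  if i = 0 ∨ n ≤ i then x i else x (i - 1) ⊓ x (i + 1)

/-- The refined sequence. -/
private def zx (x : ℕ → V) (n i : ℕ) : V :=
  if Even i then zs x n i else if n ≤ i then x i else zs x n (i - 1) ⊔ zs x n (i + 1)

private theorem up_main (x : ℕ → V) (n : ℕ) (hn : 2 ≤ n) (hup : IsAltUp x n)
    (h2 : ∀ i, i + 2 ≤ n → ¬x i ≤ x (i + 2) ∧ ¬x (i + 2) ≤ x i)
    (h3 : ∀ i, i + 3 ≤ n → ¬x i ≤ x (i + 3) ∧ ¬x (i + 3) ≤ x i) :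
    ∃ x' : ℕ → V, x' 0 = x 0 ∧ x' n = x n ∧ IsAltUp x' n ∧
      (∀ i ≤ n, if Even i then x i ≤ x' i else x' i ≤ x i) ∧ IsZigzag x' n := by
  have hA1 : ∀ i, Even i → i < n → x i ≤ x (i + 1) := by
    intro i hi hlt; have := hup i hlt; rwa [if_pos hi] at this
  have hA2 : ∀ i, ¬Even i → i < n → x (i + 1) ≤ x i := by
    intro i hi hlt; have := hup i hlt; rwa [if_neg hi] at this
  have hsb : ∀ i, (i = 0 ∨ n ≤ i) → zs x n i = x i := by
    intro i h; rw [zs, if_pos h]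
  have hsmid : ∀ j, j + 1 < n → zs x n (j + 1) = x j ⊓ x (j + 2) := by
    intro j h
    rw [zs, if_neg (by omega)]
    congr 1
  have hsx : ∀ i, Even i → x i ≤ zs x n i := by
    intro i hi
    by_cases hb : i = 0 ∨ n ≤ i
    · rw [hsb i hb]
    · push_neg at hb
      obtain ⟨j, rfl⟩ := Nat.exists_eq_succ_of_ne_zero hb.1
      have hlt : j + 1 < n := hb.2
      rw [hsmid j hlt]
      have hoj : ¬Even j := by
        intro hj; exact (Nat.even_add_one.mp hi) hj
      exact le_inf (hA2 j hoj (by omega)) (hA1 (j + 1) hi hlt)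
  have hsle1 : ∀ i, i < n → zs x n i ≤ x (i + 1) := by
    intro i h
    by_cases h0 : i = 0
    · subst h0; rw [hsb 0 (Or.inl rfl)]; exact hA1 0 (by simp) h
    · obtain ⟨j, rfl⟩ := Nat.exists_eq_succ_of_ne_zero h0
      rw [hsmid j h]; exact inf_le_right
  have hsle2 : ∀ j, ¬Even j → j + 1 ≤ n → zs x n (j + 1) ≤ x j := by
    intro j hj h
    by_cases hb : n ≤ j + 1
    · rw [hsb _ (Or.inr hb)]; exact hA2 j hj (by omega)
    · rw [hsmid j (by omega)]; exact inf_le_left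
  have hinc : ∀ i, Even i → i + 2 ≤ n →
      ¬zs x n i ≤ zs x n (i + 2) ∧ ¬zs x n (i + 2) ≤ zs x n i := by
    intro i hi h
    constructor
    · intro hle
      have hx : x i ≤ zs x n (i + 2) := le_trans (hsx i hi) hle
      by_cases hb : n ≤ i + 2
      · rw [hsb _ (Or.inr hb)] at hx
        exact (h2 i h).1 hx
      · exact (h3 i (by omega)).1 (le_trans hx (hsle1 (i + 2) (by omega)))
    · intro hle
      have hx : x (i + 2) ≤ zs x n i := le_trans (hsx (i + 2) (hi.add even_two)) hle
      by_cases h0 : i = 0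
      · subst h0; rw [hsb 0 (Or.inl rfl)] at hx; exact (h2 0 h).2 hx
      · obtain ⟨j, rfl⟩ := Nat.exists_eq_succ_of_ne_zero h0
        have hoj : ¬Even j := fun hj => (Nat.even_add_one.mp hi) hj
        have : x (j + 1 + 2) ≤ x j := le_trans hx (hsle2 j hoj (by omega))
        exact (h3 j (by omega)).2 this
  have hxeven : ∀ i, Even i → zx x n i = zs x n i := by
    intro i hi; rw [zx, if_pos hi]
  have hxodd : ∀ j, Even j → j + 1 < n →
      zx x n (j + 1) = zs x n j ⊔ zs x n (j + 2) := by
    intro j hj h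
    have hne : ¬Even (j + 1) := by simp [Nat.even_add_one, hj]
    rw [zx, if_neg hne, if_neg (by omega)]
    congr 1
  have hxodd_top : ∀ i, ¬Even i → n ≤ i → zx x n i = x i := by
    intro i hi hb; rw [zx, if_neg hi, if_pos hb]
  have hptle : ∀ i, ¬Even i → i ≤ n → zx x n i ≤ x i := by
    intro i hi hin
    by_cases hb : n ≤ i
    · rw [hxodd_top i hi hb]
    · obtain ⟨j, rfl⟩ := Nat.exists_eq_succ_of_ne_zero (show i ≠ 0 by rintro rfl; exact hi Even.zero)
      have hj : Even j := by
        by_contra hj; exact hi (Nat.even_add_one.mpr hj)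
      rw [hxodd j hj (by omega)]
      exact sup_le (hsle1 j (by omega)) (hsle2 (j + 1) hi (by omega))
  have hU1 : ∀ i, Even i → i < n → zx x n i < zx x n (i + 1) := by
    intro i hi hlt
    rw [hxeven i hi]
    by_cases hb : i + 1 < n
    · rw [hxodd i hi hb]
      refine lt_of_le_of_ne le_sup_left (fun heq => (hinc i hi (by omega)).2 ?_)
      exact le_trans le_sup_right heq.ge
    · have hb' : n ≤ i + 1 := by omega
      have hne : ¬Even (i + 1) := by simp [Nat.even_add_one, hi]
      rw [hxodd_top (i + 1) hne hb']
      refine lt_of_le_of_ne (hsle1 i hlt) (fun heq => ?_)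
      have h0 : i ≠ 0 := by omega
      obtain ⟨j, rfl⟩ := Nat.exists_eq_succ_of_ne_zero h0
      have hoj : ¬Even j := fun hj => (Nat.even_add_one.mp hi) hj
      have : x (j + 1 + 1) ≤ x j := heq.ge.trans (hsle2 j hoj (by omega))
      exact (h2 j (by omega)).2 this
  have hU2 : ∀ j, Even j → j + 1 < n → zx x n (j + 2) < zx x n (j + 1) := by
    intro j hj h1
    rw [hxodd j hj h1, hxeven (j + 2) (hj.add even_two)]
    refine lt_of_le_of_ne le_sup_right (fun heq => (hinc j hj (by omega)).1 ?_)
    exact le_trans le_sup_left heq.ge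
  have haltup : IsAltUp (zx x n) n := by
    intro i hi
    by_cases he : Even i
    · rw [if_pos he]; exact (hU1 i he hi).le
    · rw [if_neg he]
      obtain ⟨j, rfl⟩ := Nat.exists_eq_succ_of_ne_zero (show i ≠ 0 by rintro rfl; exact he Even.zero)
      have hj : Even j := by
        by_contra hj; exact he (Nat.even_add_one.mpr hj)
      exact (hU2 j hj hi).le
  refine ⟨zx x n, ?_, ?_, haltup, ?_, ?_, ?_⟩
  · rw [hxeven 0 Even.zero, hsb 0 (Or.inl rfl)]
  · by_cases he : Even n
    · rw [hxeven n he, hsb n (Or.inr le_rfl)]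
    · rw [hxodd_top n he le_rfl]
  · intro i hin
    by_cases he : Even i
    · rw [if_pos he, hxeven i he]; exact hsx i he
    · rw [if_neg he]; exact hptle i he hin
  · intro i hi
    by_cases he : Even i
    · exact Or.inl (hU1 i he hi)
    · obtain ⟨j, rfl⟩ := Nat.exists_eq_succ_of_ne_zero (show i ≠ 0 by rintro rfl; exact he Even.zero)
      have hj : Even j := by
        by_contra hj; exact he (Nat.even_add_one.mpr hj)
      exact Or.inr (hU2 j hj hi)
  · intro i hi
    by_cases he : Even i
    · refine Or.inr ⟨hU1 i he (by omega), hU2 i he (by omega), ?_⟩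
      rw [hxodd i he (by omega), hxeven i he, hxeven (i + 2) (he.add even_two)]
    · obtain ⟨j, rfl⟩ := Nat.exists_eq_succ_of_ne_zero (show i ≠ 0 by rintro rfl; exact he Even.zero)
      have hj : Even j := by
        by_contra hj; exact he (Nat.even_add_one.mpr hj)
      have hE2 : Even (j + 2) := hj.add even_two
      have lt1 : zx x n (j + 2) < zx x n (j + 1) := hU2 j hj (by omega)
      have lt2 : zx x n (j + 2) < zx x n (j + 2 + 1) := hU1 (j + 2) hE2 (by omega)
      refine Or.inl ⟨lt1, lt2, ?_⟩
      refine le_antisymm (le_inf lt1.le lt2.le) ?_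
      have e1 : zx x n (j + 1) ≤ x (j + 1) := hptle (j + 1) he (by omega)
      have e3 : zx x n (j + 3) ≤ x (j + 3) := by
        refine hptle (j + 3) ?_ (by omega)
        simp [Nat.even_add_one, parity_simps, hj]
      calc zx x n (j + 1) ⊓ zx x n (j + 1 + 2) ≤ x (j + 1) ⊓ x (j + 3) := by
            exact inf_le_inf e1 e3
        _ = zs x n (j + 2) := (hsmid (j + 1) (by omega)).symm
        _ = zx x n (j + 1 + 1) := (hxeven (j + 2) hE2).symm

/-- Every weak zigzag can be refined to a zigzag. -/
theorem exists_zigzag_refinement (x : ℕ → V) (n : ℕ) (h : IsWeakZigzag x n) :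
    ∃ x' : ℕ → V, Refines x' x n ∧ IsZigzag x' n := by
  obtain ⟨hn, halt, h2, h3⟩ := h
  rcases halt with hup | hdown
  · obtain ⟨x', e0, en, hup', hpt, hz⟩ := up_main x n hn hup h2 h3
    exact ⟨x', ⟨e0, en, Or.inl ⟨hup, hup', hpt⟩⟩, hz⟩
  · have hup' : IsAltUp (V := Vᵒᵈ) x n := hdown
    obtain ⟨x', e0, en, hupx', hpt, hz⟩ :=
      up_main (V := Vᵒᵈ) x n hn hup'
        (fun i hi => ⟨(h2 i hi).2, (h2 i hi).1⟩)
        (fun i hi => ⟨(h3 i hi).2, (h3 i hi).1⟩)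
    refine ⟨x', ⟨e0, en, Or.inr ⟨hdown, hupx', hpt⟩⟩, ?_, ?_⟩
    · intro i hi
      rcases hz.1 i hi with h' | h'
      · exact Or.inr h'
      · exact Or.inl h'
    · intro i hi
      rcases hz.2 i hi with ⟨a, b, c⟩ | ⟨a, b, c⟩
      · exact Or.inr ⟨a, b, c⟩
      · exact Or.inl ⟨a, b, c⟩
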